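/- With σ, R, L as above, define additionally F = Tr(R·L_sym) where L_sym has entries (L_sym)_{ij} = 2 R_{ij}/(p_i + p_j). Then F ≤ Tr(R L), with equality if and only if R commutes with σ. -/

import Mathlib

/-!
Since `R` is Hermitian, `R_ij R_ji = |R_ij|²`, so both traces are weighted sums
`∑ c_ij |R_ij|²`: with `c_ij = 2 / (p_i + p_j)` for `Lsym` and the reciprocal logarithmic mean of
`p_i, p_j` for `L`. The logarithmic mean is strictly below the arithmetic mean off the diagonal
(compare `log ((1 + x) / (1 - x)) = 2x + 2x³/3 + ⋯` with its first term), so the inequality holds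
termwise, and equality holds iff `R_ij = 0` whenever `p_i ≠ p_j`, i.e. iff `R` commutes with `σ`.
-/

open Matrix Real

lemma two_mul_lt_log_one_add_sub_log_one_sub {x : ℝ} (hx₀ : 0 < x) (hx₁ : x < 1) :
    2 * x < log (1 + x) - log (1 - x) := by
  have hseries := hasSum_log_sub_log_of_abs_lt_one (abs_lt.2 ⟨by linarith, hx₁⟩)
  have hpartial := sum_le_hasSum (Finset.range 2) (fun k _ => by positivity) hseries
  norm_num [Finset.sum_range_succ] at hpartial
  nlinarith [pow_pos hx₀ 3]

lemma two_mul_sub_div_add_lt_log_sub_log {a b : ℝ} (hb : 0 < b) (hba : b < a) :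
    2 * (a - b) / (a + b) < log a - log b := by
  have ha : 0 < a := hb.trans hba
  have hab : 0 < a + b := by linarith
  have key := two_mul_lt_log_one_add_sub_log_one_sub (x := (a - b) / (a + b))
    (div_pos (by linarith) hab) ((div_lt_one hab).2 (by linarith))
  have h₁ : 1 + (a - b) / (a + b) = 2 * a / (a + b) := by field_simp; ring
  have h₂ : 1 - (a - b) / (a + b) = 2 * b / (a + b) := by field_simp; ring
  rw [h₁, h₂, log_div (by positivity) hab.ne', log_div (by positivity) hab.ne',
    log_mul two_ne_zero ha.ne', log_mul two_ne_zero hb.ne', ← mul_div_assoc] at key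
  linarith

lemma two_div_add_lt_log_sub_log_div_sub {x y : ℝ} (hx : 0 < x) (hy : 0 < y) (hxy : x ≠ y) :
    2 / (x + y) < (log x - log y) / (x - y) := by
  rcases hxy.lt_or_gt with h | h
  · have key := two_mul_sub_div_add_lt_log_sub_log hx h
    rw [lt_div_iff_of_neg (sub_neg.2 h)]
    have : 2 / (x + y) * (x - y) = -(2 * (y - x) / (y + x)) := by rw [add_comm]; ring
    linarith
  · have key := two_mul_sub_div_add_lt_log_sub_log hy h
    rw [lt_div_iff₀ (sub_pos.2 h)]
    have : 2 / (x + y) * (x - y) = 2 * (x - y) / (x + y) := by ring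
    linarith

/-- The reciprocal of the logarithmic mean, extended continuously to the diagonal. -/
noncomputable def invLogMean (x y : ℝ) : ℝ :=
  if x = y then x⁻¹ else (log x - log y) / (x - y)

lemma two_div_add_le_invLogMean {x y : ℝ} (hx : 0 < x) (hy : 0 < y) :
    2 / (x + y) ≤ invLogMean x y := by
  unfold invLogMean
  split_ifs with h
  · subst h; field_simp; norm_num
  · exact (two_div_add_lt_log_sub_log_div_sub hx hy h).le

lemma two_div_add_eq_invLogMean_iff {x y : ℝ} (hx : 0 < x) (hy : 0 < y) :
    2 / (x + y) = invLogMean x y ↔ x = y := by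
  refine ⟨fun heq => ?_, fun h => ?_⟩
  · by_contra h
    have := two_div_add_lt_log_sub_log_div_sub hx hy h
    rw [invLogMean, if_neg h] at heq
    exact this.ne heq
  · subst h; rw [invLogMean, if_pos rfl]; field_simp; norm_num

namespace Matrix

variable {n : Type*} [Fintype n]

lemma IsHermitian.trace_mul_hadamard {R : Matrix n n ℂ} (hR : R.IsHermitian) (c : Matrix n n ℝ) :
    (R * (c.map (↑) ⊙ R)).trace = ((∑ i, ∑ j, c i j * Complex.normSq (R i j) : ℝ) : ℂ) := by
  rw [trace_mul_comm]
  simp only [trace, diag_apply, mul_apply, hadamard_apply, map_apply]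
  push_cast
  refine Finset.sum_congr rfl fun i _ => Finset.sum_congr rfl fun j _ => ?_
  rw [← Complex.mul_conj, ← hR.apply j i, Complex.star_def]
  ring

variable {R : Matrix n n ℂ} {c d : Matrix n n ℝ}

lemma IsHermitian.re_trace_mul_hadamard_le (hR : R.IsHermitian) (hcd : ∀ i j, c i j ≤ d i j) :
    (R * (c.map (↑) ⊙ R)).trace.re ≤ (R * (d.map (↑) ⊙ R)).trace.re := by
  rw [hR.trace_mul_hadamard, hR.trace_mul_hadamard, Complex.ofReal_re, Complex.ofReal_re]
  exact Finset.sum_le_sum fun i _ => Finset.sum_le_sum fun j _ =>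
    mul_le_mul_of_nonneg_right (hcd i j) (Complex.normSq_nonneg _)

lemma IsHermitian.trace_mul_hadamard_eq_iff (hR : R.IsHermitian) (hcd : ∀ i j, c i j ≤ d i j) :
    (R * (c.map (↑) ⊙ R)).trace = (R * (d.map (↑) ⊙ R)).trace ↔
      ∀ i j, c i j = d i j ∨ R i j = 0 := by
  have hterm (i j : n) : c i j * Complex.normSq (R i j) ≤ d i j * Complex.normSq (R i j) :=
    mul_le_mul_of_nonneg_right (hcd i j) (Complex.normSq_nonneg _)
  rw [hR.trace_mul_hadamard, hR.trace_mul_hadamard, Complex.ofReal_inj,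
    Finset.sum_eq_sum_iff_of_le fun i _ => Finset.sum_le_sum fun j _ => hterm i j]
  simp only [Finset.mem_univ, forall_const,
    Finset.sum_eq_sum_iff_of_le fun j _ => hterm _ j, mul_eq_mul_right_iff, Complex.normSq_eq_zero]

variable [DecidableEq n] {K : Type*} [CommSemiring K] [IsRightCancelMulZero K]

lemma diagonal_mul_eq_mul_diagonal_iff {d : n → K} {A : Matrix n n K} :
    diagonal d * A = A * diagonal d ↔ ∀ i j, d i = d j ∨ A i j = 0 := by
  simp only [← Matrix.ext_iff, diagonal_mul, mul_diagonal, mul_comm (A _ _), mul_eq_mul_right_iff]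

end Matrix

theorem fisher_le_relent_general
    (N : ℕ) (p : Fin N → ℝ) (hp : ∀ i, 0 < p i)
    (R : Matrix (Fin N) (Fin N) ℂ) (hR : R.IsHermitian)
    (σ : Matrix (Fin N) (Fin N) ℂ) (hσ : σ = Matrix.diagonal (fun i => (p i : ℂ)))
    (L Lsym : Matrix (Fin N) (Fin N) ℂ)
    (hL : ∀ i j, L i j =
      if p i = p j then R i j / (p i : ℂ)
      else (((Real.log (p i) - Real.log (p j)) / (p i - p j) : ℝ) : ℂ) * R i j)
    (hLsym : ∀ i j, Lsym i j = 2 * R i j / ((p i + p j : ℝ) : ℂ)) :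
    ((R * Lsym).trace).re ≤ ((R * L).trace).re ∧
    ((R * Lsym).trace = (R * L).trace ↔ σ * R = R * σ) := by
  set S : Matrix (Fin N) (Fin N) ℝ := of fun i j => 2 / (p i + p j) with hS
  set Λ : Matrix (Fin N) (Fin N) ℝ := of fun i j => invLogMean (p i) (p j) with hΛ
  have hLsym' : Lsym = S.map (↑) ⊙ R := by
    ext i j
    rw [hLsym, hadamard_apply, map_apply, hS, of_apply]
    push_cast
    ring
  have hL' : L = Λ.map (↑) ⊙ R := by
    ext i j
    rw [hL, hadamard_apply, map_apply, hΛ, of_apply, invLogMean]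
    split_ifs
    · push_cast; ring
    · rfl
  have hle (i j : Fin N) : S i j ≤ Λ i j :=
    two_div_add_le_invLogMean (hp i) (hp j)
  refine ⟨hLsym' ▸ hL' ▸ hR.re_trace_mul_hadamard_le hle, ?_⟩
  rw [hLsym', hL', hR.trace_mul_hadamard_eq_iff hle, hσ, diagonal_mul_eq_mul_diagonal_iff]
  simp only [hS, hΛ, of_apply, two_div_add_eq_invLogMean_iff (hp _) (hp _), Complex.ofReal_inj]

theorem fisher_le_relent
    (N : ℕ) (p : Fin N → ℝ) (hp : ∀ i, 0 < p i) (hsum : ∑ i, p i = 1)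
    (R : Matrix (Fin N) (Fin N) ℂ) (hR : R.IsHermitian) (htr : R.trace = 0)
    (σ : Matrix (Fin N) (Fin N) ℂ) (hσ : σ = Matrix.diagonal (fun i => (p i : ℂ)))
    (L Lsym : Matrix (Fin N) (Fin N) ℂ)
    (hL : ∀ i j, L i j =
      if p i = p j then R i j / (p i : ℂ)
      else (((Real.log (p i) - Real.log (p j)) / (p i - p j) : ℝ) : ℂ) * R i j)
    (hLsym : ∀ i j, Lsym i j = 2 * R i j / ((p i + p j : ℝ) : ℂ)) :
    ((R * Lsym).trace).re ≤ ((R * L).trace).re ∧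
    ((R * Lsym).trace = (R * L).trace ↔ σ * R = R * σ) :=
  fisher_le_relent_general N p hp R hR σ hσ L Lsym hL hLsym
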